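/- For every target state j' = (ε, j) with j' ≠ j̃, the probability that the Diaconis–Holmes–Neal sampler started at the basepoint j̃ = (+1, j*) visits j' within the first 2n − 1 steps without returning to j̃ at any intermediate positive time is at least (m(j)/m(j*))·((n−1)/n)^{2n−1}. -/

import Mathlib

open scoped Classical

/-- One-step transition probability of the Diaconis–Holmes–Neal sampler on
`{+1,-1} × {1,…,n}` (a state `(ε, j)` is encoded as `(ε, j-1) : Bool × Fin n`,
with `true` standing for `+1`). -/
noncomputable def dhnP (n : ℕ) (m : ℕ → ℝ) (s t : Bool × Fin n) : ℝ :=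
  let θ : ℝ := 1 / n
  let j : ℕ := (s.2 : ℕ) + 1
  let jn : ℕ := if s.1 then j + 1 else j - 1
  let r : ℝ := min 1 (m jn / m j)
  (if t.1 = s.1 ∧ (t.2 : ℕ) + 1 = jn then (1 - θ) * r else 0) +
  (if t.1 ≠ s.1 ∧ t.2 = s.2 then (1 - θ) * (1 - r) else 0) +
  (if t.1 ≠ s.1 ∧ (t.2 : ℕ) + 1 = jn then θ * r else 0) +
  (if t.1 = s.1 ∧ t.2 = s.2 then θ * (1 - r) else 0)

namespace DHNAux

def mkSt (n : ℕ) (hn : 0 < n) (b : Bool) (l : ℕ) : Bool × Fin n :=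
  (b, ⟨min (l - 1) (n - 1), by omega⟩)

/-- The canonical path: up from `jstar` to `q` on the `true` side, jump to the
`false` side, down to `p`, jump back to the `true` side, up again. -/
def pathC (n : ℕ) (hn : 0 < n) (jstar q p : ℕ) (i : ℕ) : Bool × Fin n :=
  if i ≤ q - jstar then mkSt n hn true (jstar + i)
  else if i ≤ (q - jstar) + 1 + (q - p) then mkSt n hn false (q - (i - (q - jstar) - 1))
  else mkSt n hn true (p + (i - ((q - jstar) + (q - p) + 2)))

variable {n : ℕ} {m : ℕ → ℝ}

lemma mkSt_fst (hn : 0 < n) (b : Bool) (l : ℕ) : (mkSt n hn b l).1 = b := rfl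

lemma mkSt_snd (hn : 0 < n) (b : Bool) (l : ℕ) (h1 : 1 ≤ l) (h2 : l ≤ n) :
    ((mkSt n hn b l).2 : ℕ) + 1 = l := by
  simp only [mkSt]; omega

lemma mkSt_inj (hn : 0 < n) {b b' : Bool} {l l' : ℕ} (hl : 1 ≤ l) (hl2 : l ≤ n)
    (hl' : 1 ≤ l') (hl2' : l' ≤ n) :
    mkSt n hn b l = mkSt n hn b' l' ↔ (b = b' ∧ l = l') := by
  simp only [mkSt, Prod.mk.injEq, Fin.mk.injEq]
  constructor
  · rintro ⟨h1, h2⟩; exact ⟨h1, by omega⟩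
  · rintro ⟨h1, h2⟩; exact ⟨h1, by omega⟩

lemma pathC_eval₁ (hn : 0 < n) {jstar q p i : ℕ} (h : i ≤ q - jstar) :
    pathC n hn jstar q p i = mkSt n hn true (jstar + i) := if_pos h

lemma pathC_eval₂ (hn : 0 < n) {jstar q p i : ℕ} (h1 : q - jstar < i)
    (h2 : i ≤ (q - jstar) + 1 + (q - p)) :
    pathC n hn jstar q p i = mkSt n hn false (q - (i - (q - jstar) - 1)) := by
  unfold pathC; rw [if_neg (by omega), if_pos h2]

lemma pathC_eval₃ (hn : 0 < n) {jstar q p i : ℕ} (h : (q - jstar) + 1 + (q - p) < i) :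
    pathC n hn jstar q p i = mkSt n hn true (p + (i - ((q - jstar) + (q - p) + 2))) := by
  unfold pathC; rw [if_neg (by omega), if_neg (by omega)]

lemma dhnP_pair_up (s2 t2 : Fin n) (h3 : (t2:ℕ) = (s2:ℕ)+1) :
    dhnP n m (true, s2) (true, t2)
      = (1 - 1/(n:ℝ)) * min 1 (m ((s2:ℕ)+2)/m ((s2:ℕ)+1)) := by
  have h4 : t2 ≠ s2 := by intro h; rw [h] at h3; omega
  simp only [dhnP]
  simp [h3, h4]

lemma dhnP_pair_down (s2 t2 : Fin n) (h3 : (t2:ℕ) + 1 = (s2:ℕ)) :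
    dhnP n m (false, s2) (false, t2)
      = (1 - 1/(n:ℝ)) * min 1 (m ((s2:ℕ))/m ((s2:ℕ)+1)) := by
  have h4 : t2 ≠ s2 := by intro h; rw [h] at h3; omega
  simp only [dhnP]
  simp [h3, h4]

lemma dhnP_pair_jump (b b' : Bool) (s2 : Fin n) (h : b' = !b) :
    dhnP n m (b, s2) (b', s2)
      = (1 - 1/(n:ℝ)) * (1 - min 1 (m (if b then (s2:ℕ) + 2 else (s2:ℕ)) / m ((s2:ℕ) + 1))) := by
  subst h
  simp only [dhnP]
  rcases b <;> simp

lemma dhnP_up (hn : 0 < n) (a : ℕ) (h1 : 1 ≤ a) (h2 : a < n) :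
    dhnP n m (mkSt n hn true a) (mkSt n hn true (a+1))
      = (1 - 1/(n:ℝ)) * min 1 (m (a+1) / m a) := by
  have hs := mkSt_snd hn true a h1 (le_of_lt h2)
  have ht := mkSt_snd hn true (a+1) (by omega) h2
  rw [show mkSt n hn true a = (true, (mkSt n hn true a).2) from rfl,
      show mkSt n hn true (a+1) = (true, (mkSt n hn true (a+1)).2) from rfl,
      dhnP_pair_up _ _ (by omega)]
  rw [show ((mkSt n hn true a).2 : ℕ) + 2 = a + 1 by omega,
      show ((mkSt n hn true a).2 : ℕ) + 1 = a by omega]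

lemma dhnP_down (hn : 0 < n) (a : ℕ) (h1 : 2 ≤ a) (h2 : a ≤ n) :
    dhnP n m (mkSt n hn false a) (mkSt n hn false (a-1))
      = (1 - 1/(n:ℝ)) * min 1 (m (a-1) / m a) := by
  have hs := mkSt_snd hn false a (by omega) h2
  have ht := mkSt_snd hn false (a-1) (by omega) (by omega)
  rw [show mkSt n hn false a = (false, (mkSt n hn false a).2) from rfl,
      show mkSt n hn false (a-1) = (false, (mkSt n hn false (a-1)).2) from rfl,
      dhnP_pair_down _ _ (by omega)]
  rw [show ((mkSt n hn false a).2 : ℕ) = a - 1 by omega,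
      show a - 1 + 1 = a by omega]

lemma dhnP_jump_right (hn : 0 < n) (a : ℕ) (h1 : 1 ≤ a) (h2 : a ≤ n) :
    dhnP n m (mkSt n hn true a) (mkSt n hn false a)
      = (1 - 1/(n:ℝ)) * (1 - min 1 (m (a+1) / m a)) := by
  have hs := mkSt_snd hn true a h1 h2
  rw [show mkSt n hn true a = (true, (mkSt n hn true a).2) from rfl,
      show mkSt n hn false a = (false, (mkSt n hn true a).2) from rfl,
      dhnP_pair_jump true false _ rfl]
  simp only [if_pos]
  rw [show ((mkSt n hn true a).2 : ℕ) + 2 = a + 1 by omega,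
      show ((mkSt n hn true a).2 : ℕ) + 1 = a by omega]

lemma dhnP_jump_left (hn : 0 < n) (a : ℕ) (h1 : 1 ≤ a) (h2 : a ≤ n) :
    dhnP n m (mkSt n hn false a) (mkSt n hn true a)
      = (1 - 1/(n:ℝ)) * (1 - min 1 (m (a-1) / m a)) := by
  have hs := mkSt_snd hn false a h1 h2
  rw [show mkSt n hn false a = (false, (mkSt n hn false a).2) from rfl,
      show mkSt n hn true a = (true, (mkSt n hn false a).2) from rfl,
      dhnP_pair_jump false true _ rfl]
  rw [show ((mkSt n hn false a).2 : ℕ) = a - 1 by omega,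
      show a - 1 + 1 = a by omega]
  simp

lemma dhnP_nonneg (hn : 1 ≤ n) (hm0 : m 0 = 0) (hmtop : m (n+1) = 0)
    (hpos : ∀ j, 1 ≤ j → j ≤ n → 0 < m j) (s t : Bool × Fin n) :
    0 ≤ dhnP n m s t := by
  have hθ0 : (0:ℝ) ≤ 1/(n:ℝ) := by positivity
  have hθ1 : (1:ℝ)/(n:ℝ) ≤ 1 := by
    rw [div_le_one (by exact_mod_cast Nat.pos_of_ne_zero (by omega))]
    exact_mod_cast hn
  have hj : 0 < m ((s.2:ℕ) + 1) := hpos _ (by omega) (by have := s.2.isLt; omega)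
  have hjn : 0 ≤ m (if s.1 then (s.2:ℕ)+1+1 else (s.2:ℕ)+1-1) := by
    have hlt := s.2.isLt
    split
    · rcases Nat.lt_or_ge ((s.2:ℕ)+1+1) (n+1) with h | h
      · exact le_of_lt (hpos _ (by omega) (by omega))
      · rw [show (s.2:ℕ)+1+1 = n+1 by omega, hmtop]
    · rcases Nat.eq_zero_or_pos ((s.2:ℕ)+1-1) with h | h
      · rw [h, hm0]
      · exact le_of_lt (hpos _ h (by omega))
  set r : ℝ := min 1 (m (if s.1 then (s.2:ℕ)+1+1 else (s.2:ℕ)+1-1) / m ((s.2:ℕ)+1)) with hr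
  have hr0 : 0 ≤ r := le_min (by norm_num) (by positivity)
  have hr1 : r ≤ 1 := min_le_left _ _
  have h1θ : (0:ℝ) ≤ 1 - 1/(n:ℝ) := by linarith
  unfold dhnP
  dsimp only
  rw [← hr]
  have := sub_nonneg.2 hr1
  positivity

lemma teleA (f : ℕ → ℝ) (a d : ℕ) (hpos : ∀ i ≤ d, 0 < f (a + i))
    (hmono : ∀ i < d, f (a + i + 1) ≤ f (a + i)) :
    ∏ i ∈ Finset.range d, min 1 (f (a + i + 1) / f (a + i)) = f (a + d) / f a := by
  induction d with
  | zero => simp; rw [div_self (by simpa using (hpos 0 (by omega)).ne')]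
  | succ d ih =>
    rw [Finset.prod_range_succ, ih (fun i hi => hpos i (by omega)) (fun i hi => hmono i (by omega)),
      min_eq_right (div_le_one_of_le₀ (hmono d (by omega)) (hpos d (by omega)).le)]
    have h1 : f (a + d) ≠ 0 := (hpos d (by omega)).ne'
    have h2 : f a ≠ 0 := (hpos 0 (by omega)).ne'
    simp only [ne_eq] at h1 h2
    field_simp
    ring

lemma teleB (f : ℕ → ℝ) (a d : ℕ) (hd : d ≤ a) (hpos : ∀ i ≤ d, 0 < f (a - i))
    (hmono : ∀ i < d, f (a - i - 1) ≤ f (a - i)) :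
    ∏ i ∈ Finset.range d, min 1 (f (a - i - 1) / f (a - i)) = f (a - d) / f a := by
  induction d with
  | zero => simp; rw [div_self (by simpa using (hpos 0 (by omega)).ne')]
  | succ d ih =>
    rw [Finset.prod_range_succ, ih (by omega) (fun i hi => hpos i (by omega))
        (fun i hi => hmono i (by omega)),
      min_eq_right (div_le_one_of_le₀ (hmono d (by omega)) (hpos d (by omega)).le)]
    rw [show a - d - 1 = a - (d+1) by omega]
    have h1 : f (a - d) ≠ 0 := (hpos d (by omega)).ne'
    have h2 : f a ≠ 0 := by
      have := (hpos 0 (by omega)).ne'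
      simpa using this
    simp only [ne_eq] at h1 h2
    field_simp

lemma teleOne (g : ℕ → ℝ) (d : ℕ) (h : ∀ i < d, 1 ≤ g i) :
    ∏ i ∈ Finset.range d, min 1 (g i) = 1 :=
  Finset.prod_eq_one fun i hi => min_eq_left (h i (Finset.mem_range.1 hi))

lemma one_sub_min_div {x y : ℝ} (hxy : x ≤ y) (hy : 0 < y) :
    1 - min 1 (x / y) = (y - x) / y := by
  rw [min_eq_right ((div_le_one hy).2 hxy)]
  field_simp

lemma sum_paths_ge {α : Type*} [Fintype α] (N : ℕ)
    (F : (t : ℕ) → (Fin (t+1) → α) → ℝ) (hF : ∀ t w, 0 ≤ F t w)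
    {ι : Type*} [DecidableEq ι] (P : Finset ι) (τ : ι → ℕ)
    (W : (i : ι) → Fin (τ i + 1) → α)
    (hτ : ∀ i ∈ P, τ i < N)
    (hinj : Set.InjOn (fun i => (⟨τ i, W i⟩ : Σ t : ℕ, Fin (t+1) → α)) P) :
    ∑ i ∈ P, F (τ i) (W i) ≤ ∑ t ∈ Finset.range N, ∑ w : Fin (t+1) → α, F t w := by
  classical
  rw [show (∑ t ∈ Finset.range N, ∑ w : Fin (t+1) → α, F t w)
      = ∑ x ∈ (Finset.range N).sigma (fun t => (Finset.univ : Finset (Fin (t+1) → α))),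
          F x.1 x.2 by rw [Finset.sum_sigma]]
  rw [show (∑ i ∈ P, F (τ i) (W i))
      = ∑ x ∈ P.image (fun i => (⟨τ i, W i⟩ : Σ t : ℕ, Fin (t+1) → α)), F x.1 x.2 by
    rw [Finset.sum_image (fun x hx y hy h => hinj hx hy h)]]
  apply Finset.sum_le_sum_of_subset_of_nonneg
  · intro x hx
    obtain ⟨i, hi, rfl⟩ := Finset.mem_image.1 hx
    exact Finset.mem_sigma.2 ⟨Finset.mem_range.2 (hτ i hi), Finset.mem_univ _⟩
  · intro x _ _
    exact hF x.1 x.2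

lemma sigma_eval {α : Type*} {t t' : ℕ} {w : Fin (t+1) → α} {w' : Fin (t'+1) → α}
    (h : (⟨t, w⟩ : Σ t : ℕ, Fin (t+1) → α) = ⟨t', w'⟩) (i : ℕ) :
    w ⟨min i t, by omega⟩ = w' ⟨min i t', by omega⟩ :=
  congrArg (fun s : Σ t : ℕ, Fin (t+1) → α => s.2 ⟨min i s.1, by omega⟩) h

section Segments

variable {n jstar : ℕ} {m : ℕ → ℝ}

lemma up_seg (hn : 0 < n) (hpos : ∀ j, 1 ≤ j → j ≤ n → 0 < m j)
    (hdown : ∀ j, jstar ≤ j → j < n → m (j + 1) ≤ m j)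
    (hj1 : 1 ≤ jstar) (q : ℕ) (hq1 : jstar ≤ q) (hq2 : q ≤ n) :
    ∏ i ∈ Finset.range (q - jstar),
        dhnP n m (mkSt n hn true (jstar + i)) (mkSt n hn true (jstar + i + 1))
      = (1 - 1/(n:ℝ))^(q - jstar) * (m q / m jstar) := by
  have hcongr : ∀ i ∈ Finset.range (q - jstar),
      dhnP n m (mkSt n hn true (jstar + i)) (mkSt n hn true (jstar + i + 1))
        = (1 - 1/(n:ℝ)) * min 1 (m (jstar + i + 1) / m (jstar + i)) := by
    intro i hi
    rw [Finset.mem_range] at hi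
    exact dhnP_up hn (jstar + i) (by omega) (by omega)
  rw [Finset.prod_congr rfl hcongr, Finset.prod_mul_distrib, Finset.prod_const,
    Finset.card_range,
    teleA m jstar (q - jstar) (fun i hi => hpos _ (by omega) (by omega))
      (fun i hi => hdown (jstar + i) (by omega) (by omega)),
    show jstar + (q - jstar) = q by omega]

lemma down_seg (hn : 0 < n) (hpos : ∀ j, 1 ≤ j → j ≤ n → 0 < m j)
    (hup : ∀ j, 1 ≤ j → j < jstar → m j ≤ m (j + 1))
    (hdown : ∀ j, jstar ≤ j → j < n → m (j + 1) ≤ m j)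
    (hj1 : 1 ≤ jstar) (p q : ℕ) (hp1 : 1 ≤ p) (hpq : p ≤ q)
    (hq1 : jstar ≤ q) (hq2 : q ≤ n) :
    ∏ i ∈ Finset.range (q - p),
        dhnP n m (mkSt n hn false (q - i)) (mkSt n hn false (q - i - 1))
      = (1 - 1/(n:ℝ))^(q - p) * (m (min p jstar) / m jstar) := by
  have hcongr : ∀ i ∈ Finset.range (q - p),
      dhnP n m (mkSt n hn false (q - i)) (mkSt n hn false (q - i - 1))
        = (1 - 1/(n:ℝ)) * min 1 (m (q - i - 1) / m (q - i)) := by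
    intro i hi
    rw [Finset.mem_range] at hi
    exact dhnP_down hn (q - i) (by omega) (by omega)
  rw [Finset.prod_congr rfl hcongr, Finset.prod_mul_distrib, Finset.prod_const,
    Finset.card_range]
  congr 1
  rcases le_or_gt p jstar with hcase | hcase
  · -- crosses jstar
    rw [show q - p = (q - jstar) + (jstar - p) by omega, Finset.prod_range_add]
    have h1 : ∏ i ∈ Finset.range (q - jstar), min 1 (m (q - i - 1) / m (q - i)) = 1 := by
      apply teleOne
      intro i hi
      have hd := hdown (q - i - 1) (by omega) (by omega)
      rw [show q - i - 1 + 1 = q - i by omega] at hd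
      exact (one_le_div (hpos (q - i) (by omega) (by omega))).2 hd
    have h2 : ∀ i ∈ Finset.range (jstar - p),
        min 1 (m (q - (q - jstar + i) - 1) / m (q - (q - jstar + i)))
          = min 1 (m (jstar - i - 1) / m (jstar - i)) := by
      intro i hi
      rw [Finset.mem_range] at hi
      rw [show q - (q - jstar + i) - 1 = jstar - i - 1 by omega,
        show q - (q - jstar + i) = jstar - i by omega]
    rw [h1, Finset.prod_congr rfl h2, one_mul,
      teleB m jstar (jstar - p) (by omega)
        (fun i hi => hpos _ (by omega) (by omega))
        (fun i hi => by
          have hu := hup (jstar - i - 1) (by omega) (by omega)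
          rwa [show jstar - i - 1 + 1 = jstar - i by omega] at hu),
      show jstar - (jstar - p) = p by omega, min_eq_left hcase]
  · -- stays above jstar
    rw [min_eq_right hcase.le]
    rw [teleOne _ _ (fun i hi => by
      have hd := hdown (q - i - 1) (by omega) (by omega)
      rw [show q - i - 1 + 1 = q - i by omega] at hd
      exact (one_le_div (hpos (q - i) (by omega) (by omega))).2 hd)]
    rw [div_self (hpos jstar hj1 (by omega)).ne']

end Segments
section Products
variable {n jstar : ℕ} {m : ℕ → ℝ}

lemma caseA_prod (hn : 0 < n) (hpos : ∀ j, 1 ≤ j → j ≤ n → 0 < m j)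
    (hdown : ∀ j, jstar ≤ j → j < n → m (j + 1) ≤ m j)
    (hj1 : 1 ≤ jstar) (k : ℕ) (hk1 : jstar ≤ k) (hk2 : k ≤ n) :
    ∏ i ∈ Finset.range (k - jstar),
        dhnP n m (pathC n hn jstar k k i) (pathC n hn jstar k k (i+1))
      = (1 - 1/(n:ℝ))^(k - jstar) * (m k / m jstar) := by
  have hcongr : ∀ i ∈ Finset.range (k - jstar),
      dhnP n m (pathC n hn jstar k k i) (pathC n hn jstar k k (i+1))
        = dhnP n m (mkSt n hn true (jstar + i)) (mkSt n hn true (jstar + i + 1)) := by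
    intro i hi
    rw [Finset.mem_range] at hi
    rw [pathC_eval₁ hn (by omega), pathC_eval₁ hn (by omega)]
    rfl
  rw [Finset.prod_congr rfl hcongr]
  exact up_seg hn hpos hdown hj1 k hk1 hk2

lemma caseB_prod (hn : 0 < n) (hmtop : m (n + 1) = 0)
    (hpos : ∀ j, 1 ≤ j → j ≤ n → 0 < m j)
    (hup : ∀ j, 1 ≤ j → j < jstar → m j ≤ m (j + 1))
    (hdown : ∀ j, jstar ≤ j → j < n → m (j + 1) ≤ m j)
    (hj1 : 1 ≤ jstar) (k q : ℕ) (hk1 : 1 ≤ k) (hq1 : jstar ≤ q) (hq2 : k ≤ q)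
    (hq3 : q ≤ n) :
    ∏ i ∈ Finset.range ((q - jstar) + 1 + (q - k)),
        dhnP n m (pathC n hn jstar q k i) (pathC n hn jstar q k (i+1))
      = (1 - 1/(n:ℝ))^((q - jstar) + 1 + (q - k))
          * ((m q - m (q+1)) * m (min k jstar) / (m jstar * m jstar)) := by
  rw [Finset.prod_range_add, Finset.prod_range_succ]
  -- segment 1 : up moves
  have h1 : ∀ i ∈ Finset.range (q - jstar),
      dhnP n m (pathC n hn jstar q k i) (pathC n hn jstar q k (i+1))
        = dhnP n m (mkSt n hn true (jstar + i)) (mkSt n hn true (jstar + i + 1)) := by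
    intro i hi
    rw [Finset.mem_range] at hi
    rw [pathC_eval₁ hn (by omega), pathC_eval₁ hn (by omega)]
    rfl
  -- jump at q
  have h2 : dhnP n m (pathC n hn jstar q k (q - jstar)) (pathC n hn jstar q k (q - jstar + 1))
      = (1 - 1/(n:ℝ)) * ((m q - m (q + 1)) / m q) := by
    rw [pathC_eval₁ hn (le_refl _), pathC_eval₂ hn (by omega) (by omega),
      show jstar + (q - jstar) = q by omega,
      show q - (q - jstar + 1 - (q - jstar) - 1) = q by omega,
      dhnP_jump_right hn q (by omega) hq3]
    congr 1
    apply one_sub_min_div _ (hpos q (by omega) hq3)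
    rcases Nat.lt_or_ge q n with h | h
    · exact hdown q hq1 h
    · rw [show q + 1 = n + 1 by omega, hmtop]
      exact (hpos q (by omega) hq3).le
  -- segment 3 : down moves
  have h3 : ∀ i ∈ Finset.range (q - k),
      dhnP n m (pathC n hn jstar q k ((q - jstar) + 1 + i))
          (pathC n hn jstar q k ((q - jstar) + 1 + i + 1))
        = dhnP n m (mkSt n hn false (q - i)) (mkSt n hn false (q - i - 1)) := by
    intro i hi
    rw [Finset.mem_range] at hi
    rw [pathC_eval₂ hn (by omega) (by omega), pathC_eval₂ hn (by omega) (by omega),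
      show q - ((q - jstar) + 1 + i - (q - jstar) - 1) = q - i by omega,
      show q - ((q - jstar) + 1 + i + 1 - (q - jstar) - 1) = q - i - 1 by omega]
  rw [Finset.prod_congr rfl h1, up_seg hn hpos hdown hj1 q hq1 hq3, h2,
    Finset.prod_congr rfl h3, down_seg hn hpos hup hdown hj1 k q hk1 hq2 hq1 hq3]
  have hq0 : m q ≠ 0 := (hpos q (by omega) hq3).ne'
  have hj0 : m jstar ≠ 0 := (hpos jstar hj1 (by omega)).ne'
  simp only [pow_add, pow_one]
  field_simp

lemma caseC_prod (hn : 0 < n) (hm0 : m 0 = 0) (hmtop : m (n + 1) = 0)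
    (hpos : ∀ j, 1 ≤ j → j ≤ n → 0 < m j)
    (hup : ∀ j, 1 ≤ j → j < jstar → m j ≤ m (j + 1))
    (hdown : ∀ j, jstar ≤ j → j < n → m (j + 1) ≤ m j)
    (hj1 : 1 ≤ jstar) (hj2 : jstar ≤ n)
    (k q p : ℕ) (hk2 : k < jstar) (hp1 : 1 ≤ p) (hp2 : p ≤ k)
    (hq1 : jstar ≤ q) (hq3 : q ≤ n) :
    ∏ i ∈ Finset.range ((q - jstar) + 1 + (q - p) + 1 + (k - p)),
        dhnP n m (pathC n hn jstar q p i) (pathC n hn jstar q p (i+1))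
      = (1 - 1/(n:ℝ))^((q - jstar) + 1 + (q - p) + 1 + (k - p))
          * ((m q - m (q+1)) * (m p - m (p-1)) / (m jstar * m jstar)) := by
  set A := q - jstar with hA
  set B := q - p with hB
  rw [Finset.prod_range_add, Finset.prod_range_succ, Finset.prod_range_add,
    Finset.prod_range_succ]
  -- segment 1 : up moves jstar → q
  have h1 : ∀ i ∈ Finset.range A,
      dhnP n m (pathC n hn jstar q p i) (pathC n hn jstar q p (i+1))
        = dhnP n m (mkSt n hn true (jstar + i)) (mkSt n hn true (jstar + i + 1)) := by
    intro i hi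
    rw [Finset.mem_range] at hi
    rw [pathC_eval₁ hn (by omega), pathC_eval₁ hn (by omega)]
    rfl
  -- jump right at q
  have h2 : dhnP n m (pathC n hn jstar q p A) (pathC n hn jstar q p (A + 1))
      = (1 - 1/(n:ℝ)) * ((m q - m (q + 1)) / m q) := by
    rw [pathC_eval₁ hn (le_refl _), pathC_eval₂ hn (by omega) (by omega),
      show jstar + A = q by omega,
      show q - (A + 1 - A - 1) = q by omega,
      dhnP_jump_right hn q (by omega) hq3]
    congr 1
    apply one_sub_min_div _ (hpos q (by omega) hq3)
    rcases Nat.lt_or_ge q n with h | h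
    · exact hdown q hq1 h
    · rw [show q + 1 = n + 1 by omega, hmtop]
      exact (hpos q (by omega) hq3).le
  -- segment 3 : down moves q → p
  have h3 : ∀ i ∈ Finset.range B,
      dhnP n m (pathC n hn jstar q p (A + 1 + i)) (pathC n hn jstar q p (A + 1 + i + 1))
        = dhnP n m (mkSt n hn false (q - i)) (mkSt n hn false (q - i - 1)) := by
    intro i hi
    rw [Finset.mem_range] at hi
    rw [pathC_eval₂ hn (by omega) (by omega), pathC_eval₂ hn (by omega) (by omega),
      show q - (A + 1 + i - A - 1) = q - i by omega,
      show q - (A + 1 + i + 1 - A - 1) = q - i - 1 by omega]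
  -- jump left at p
  have h4 : dhnP n m (pathC n hn jstar q p (A + 1 + B)) (pathC n hn jstar q p (A + 1 + B + 1))
      = (1 - 1/(n:ℝ)) * ((m p - m (p - 1)) / m p) := by
    rw [pathC_eval₂ hn (by omega) (by omega), pathC_eval₃ hn (by omega),
      show q - (A + 1 + B - A - 1) = p by omega,
      show p + (A + 1 + B + 1 - (A + B + 2)) = p by omega,
      dhnP_jump_left hn p hp1 (by omega)]
    congr 1
    apply one_sub_min_div _ (hpos p hp1 (by omega))
    rcases Nat.lt_or_ge p 2 with h | h
    · rw [show p - 1 = 0 by omega, hm0]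
      exact (hpos p hp1 (by omega)).le
    · have hu := hup (p - 1) (by omega) (by omega)
      rwa [show p - 1 + 1 = p by omega] at hu
  -- segment 5 : up moves p → k
  have h5 : ∏ i ∈ Finset.range (k - p),
      dhnP n m (pathC n hn jstar q p (A + 1 + B + 1 + i))
        (pathC n hn jstar q p (A + 1 + B + 1 + i + 1))
      = (1 - 1/(n:ℝ))^(k - p) := by
    rw [show ((1 - 1/(n:ℝ))^(k-p)) = ∏ i ∈ Finset.range (k - p), (1 - 1/(n:ℝ)) by
      rw [Finset.prod_const, Finset.card_range]]
    apply Finset.prod_congr rfl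
    intro i hi
    rw [Finset.mem_range] at hi
    rw [pathC_eval₃ hn (by omega), pathC_eval₃ hn (by omega),
      show p + (A + 1 + B + 1 + i - (A + B + 2)) = p + i by omega,
      show p + (A + 1 + B + 1 + i + 1 - (A + B + 2)) = p + i + 1 by omega,
      dhnP_up hn (p + i) (by omega) (by omega)]
    have hu := hup (p + i) (by omega) (by omega)
    rw [min_eq_left ((one_le_div (hpos (p + i) (by omega) (by omega))).2 hu), mul_one]
  rw [Finset.prod_congr rfl h1, up_seg hn hpos hdown hj1 q hq1 hq3, h2,
    Finset.prod_congr rfl h3, down_seg hn hpos hup hdown hj1 p q hp1 (by omega) hq1 hq3,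
    h4, h5, min_eq_left (by omega : p ≤ jstar)]
  have hq0 : m q ≠ 0 := (hpos q (by omega) hq3).ne'
  have hp0 : m p ≠ 0 := (hpos p hp1 (by omega)).ne'
  have hj0 : m jstar ≠ 0 := (hpos jstar hj1 (by omega)).ne'
  simp only [pow_add, pow_one]
  field_simp
  ring

end Products

end DHNAux

/-- starting from the basepoint `j̃ = (+1, j*)`, the probability of
visiting a given state `j' = (ε, j) ≠ j̃` within the first `2n - 1` steps without
returning to `j̃` at any intermediate positive time is at least
`(m j / m j*) · ((n-1)/n)^(2n-1)`.  The probability is decomposed over the first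
visit time `t` to `j'`: trajectories start at `j̃`, are at `j'` at time `t`, and
avoid both `j'` and `j̃` at all intermediate positive times. -/
theorem dhn_basepoint_to_target (n : ℕ) (hn : 3 ≤ n) (hodd : Odd n)
    (m : ℕ → ℝ) (hm0 : m 0 = 0) (hmtop : m (n + 1) = 0)
    (hpos : ∀ j, 1 ≤ j → j ≤ n → 0 < m j)
    (jstar : ℕ) (hj1 : 1 ≤ jstar) (hj2 : jstar ≤ n)
    (hup : ∀ j, 1 ≤ j → j < jstar → m j ≤ m (j + 1))
    (hdown : ∀ j, jstar ≤ j → j < n → m (j + 1) ≤ m j)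
    (jt : Bool × Fin n) (hjt : jt = (true, ⟨jstar - 1, by omega⟩))
    (j' : Bool × Fin n) (hne : j' ≠ jt) :
    (m ((j'.2 : ℕ) + 1) / m jstar) * ((n - 1 : ℝ) / n) ^ (2 * n - 1) ≤
      ∑ t ∈ Finset.range (2 * n),
        ∑ w : Fin (t + 1) → Bool × Fin n,
          (if w 0 = jt ∧ w (Fin.last t) = j' ∧
              (∀ l : Fin (t + 1), 0 < (l : ℕ) → (l : ℕ) < t → (w l ≠ j' ∧ w l ≠ jt))
           then ∏ i : Fin t, dhnP n m (w i.castSucc) (w i.succ) else 0) := by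
  classical
  have hn0 : 0 < n := by omega
  have hnR : (0:ℝ) < n := by exact_mod_cast hn0
  set c : ℝ := ((n:ℝ) - 1) / n with hc
  have hceq : (1:ℝ) - 1/(n:ℝ) = c := by rw [hc]; field_simp
  have hc0 : (0:ℝ) ≤ c := by
    rw [hc]; apply div_nonneg _ hnR.le
    have : (3:ℝ) ≤ n := by exact_mod_cast hn
    linarith
  have hc1 : c ≤ 1 := by
    rw [hc, div_le_one hnR]; linarith
  set k : ℕ := (j'.2 : ℕ) + 1 with hkdef
  have hk1 : 1 ≤ k := by omega
  have hkn : k ≤ n := by have := j'.2.isLt; omega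
  have hjtrep : jt = DHNAux.mkSt n hn0 true jstar := by
    rw [hjt]
    simp only [DHNAux.mkSt, Prod.mk.injEq, Fin.mk.injEq]
    exact ⟨trivial, by omega⟩
  have hj'rep : j' = DHNAux.mkSt n hn0 j'.1 k := by
    have h2 : (j'.2 : ℕ) = min (k - 1) (n - 1) := by have := j'.2.isLt; omega
    exact Prod.ext rfl (Fin.ext h2)
  -- the summand as a function
  set F : (t : ℕ) → (Fin (t + 1) → Bool × Fin n) → ℝ := fun t w =>
    (if w 0 = jt ∧ w (Fin.last t) = j' ∧
        (∀ l : Fin (t + 1), 0 < (l : ℕ) → (l : ℕ) < t → (w l ≠ j' ∧ w l ≠ jt))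
     then ∏ i : Fin t, dhnP n m (w i.castSucc) (w i.succ) else 0) with hFdef
  have hFnn : ∀ t w, 0 ≤ F t w := by
    intro t w
    rw [hFdef]
    dsimp only
    split
    · exact Finset.prod_nonneg fun i _ =>
        DHNAux.dhnP_nonneg (by omega) hm0 hmtop hpos _ _
    · exact le_refl 0
  have hconv : ∀ (t : ℕ) (g : ℕ → Bool × Fin n),
      (∏ i : Fin t, dhnP n m ((fun j : Fin (t+1) => g j.val) i.castSucc)
          ((fun j : Fin (t+1) => g j.val) i.succ))
        = ∏ i ∈ Finset.range t, dhnP n m (g i) (g (i+1)) := by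
    intro t g
    rw [← Fin.prod_univ_eq_prod_range (fun i => dhnP n m (g i) (g (i+1))) t]
    rfl
  rcases hε : j'.1 with _ | _
  · -- case B : target on the false side
    have ha1 : jstar ≤ max jstar k := le_max_left _ _
    have ha2 : k ≤ max jstar k := le_max_right _ _
    have ha3 : max jstar k ≤ n := max_le hj2 hkn
    set a : ℕ := max jstar k with hadef
    have key := DHNAux.sum_paths_ge (α := Bool × Fin n) (2*n) F hFnn
      (Finset.range (n + 1 - a))
      (fun i => ((a + i) - jstar) + 1 + ((a + i) - k))
      (fun i => fun j : Fin (((a + i) - jstar) + 1 + ((a + i) - k) + 1) =>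
        DHNAux.pathC n hn0 jstar (a + i) k j.val)
      (fun i hi => by
        rw [Finset.mem_range] at hi
        show ((a + i) - jstar) + 1 + ((a + i) - k) < 2 * n
        omega)
      (by
        intro x hx y hy h
        have hfst : ((a + x) - jstar) + 1 + ((a + x) - k)
            = ((a + y) - jstar) + 1 + ((a + y) - k) := congrArg Sigma.fst h
        simp only [Finset.coe_range, Set.mem_Iio] at hx hy
        omega)
    refine le_trans ?_ key
    have hterm : ∀ i ∈ Finset.range (n + 1 - a),
        c ^ (2*n - 1) * ((m (a + i) - m (a + i + 1)) * m (min k jstar) / (m jstar * m jstar))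
          ≤ F (((a + i) - jstar) + 1 + ((a + i) - k))
              (fun j : Fin (((a + i) - jstar) + 1 + ((a + i) - k) + 1) =>
                DHNAux.pathC n hn0 jstar (a + i) k j.val) := by
      intro i hi
      rw [Finset.mem_range] at hi
      have hq1 : jstar ≤ a + i := by omega
      have hq2 : k ≤ a + i := by omega
      have hq3 : a + i ≤ n := by omega
      have hmq : m (a + i + 1) ≤ m (a + i) := by
        rcases Nat.lt_or_ge (a + i) n with h | h
        · exact hdown (a + i) hq1 h
        · rw [show a + i + 1 = n + 1 by omega, hmtop]
          exact (hpos (a + i) (by omega) hq3).le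
      have hcond : (fun j : Fin (((a + i) - jstar) + 1 + ((a + i) - k) + 1) =>
            DHNAux.pathC n hn0 jstar (a + i) k j.val) 0 = jt ∧
          (fun j : Fin (((a + i) - jstar) + 1 + ((a + i) - k) + 1) =>
            DHNAux.pathC n hn0 jstar (a + i) k j.val) (Fin.last _) = j' ∧
          (∀ l : Fin (((a + i) - jstar) + 1 + ((a + i) - k) + 1),
            0 < (l : ℕ) → (l : ℕ) < ((a + i) - jstar) + 1 + ((a + i) - k) →
            ((fun j : Fin (((a + i) - jstar) + 1 + ((a + i) - k) + 1) =>
                DHNAux.pathC n hn0 jstar (a + i) k j.val) l ≠ j' ∧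
             (fun j : Fin (((a + i) - jstar) + 1 + ((a + i) - k) + 1) =>
                DHNAux.pathC n hn0 jstar (a + i) k j.val) l ≠ jt)) := by
        refine ⟨?_, ?_, ?_⟩
        · show DHNAux.pathC n hn0 jstar (a + i) k ((0 : Fin _) : ℕ) = jt
          rw [Fin.val_zero, DHNAux.pathC_eval₁ hn0 (by omega), Nat.add_zero, hjtrep]
        · show DHNAux.pathC n hn0 jstar (a + i) k ((Fin.last _ : Fin _) : ℕ) = j'
          rw [Fin.val_last, DHNAux.pathC_eval₂ hn0 (by omega) (by omega),
            show (a + i) - (((a + i) - jstar) + 1 + ((a + i) - k) - ((a + i) - jstar) - 1) = k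
              by omega, hj'rep, hε]
        · intro l hl1 hl2
          rcases le_or_gt ((l : ℕ)) ((a + i) - jstar) with hcase | hcase
          · constructor
            · show DHNAux.pathC n hn0 jstar (a + i) k ((l : ℕ)) ≠ j'
              rw [DHNAux.pathC_eval₁ hn0 hcase, hj'rep, hε]
              intro h
              have := (DHNAux.mkSt_inj hn0 (by omega) (by omega) hk1 hkn).1 h
              exact absurd this.1 (by decide)
            · show DHNAux.pathC n hn0 jstar (a + i) k ((l : ℕ)) ≠ jt
              rw [DHNAux.pathC_eval₁ hn0 hcase, hjtrep]
              intro h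
              have := (DHNAux.mkSt_inj hn0 (by omega) (by omega) hj1 hj2).1 h
              omega
          · have hlev1 : 1 ≤ (a + i) - ((l : ℕ) - ((a + i) - jstar) - 1) := by omega
            have hlev2 : (a + i) - ((l : ℕ) - ((a + i) - jstar) - 1) ≤ n := by omega
            constructor
            · show DHNAux.pathC n hn0 jstar (a + i) k ((l : ℕ)) ≠ j'
              rw [DHNAux.pathC_eval₂ hn0 hcase (by omega), hj'rep, hε]
              intro h
              have := (DHNAux.mkSt_inj hn0 hlev1 hlev2 hk1 hkn).1 h
              omega
            · show DHNAux.pathC n hn0 jstar (a + i) k ((l : ℕ)) ≠ jt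
              rw [DHNAux.pathC_eval₂ hn0 hcase (by omega), hjtrep]
              intro h
              have := (DHNAux.mkSt_inj hn0 hlev1 hlev2 hj1 hj2).1 h
              exact absurd this.1 (by decide)
      rw [hFdef]
      dsimp only
      rw [if_pos hcond, hconv _ (DHNAux.pathC n hn0 jstar (a + i) k),
        DHNAux.caseB_prod hn0 hmtop hpos hup hdown hj1 k (a + i) hk1 hq1 hq2 hq3, hceq]
      apply mul_le_mul_of_nonneg_right
      · exact pow_le_pow_of_le_one hc0 hc1 (by omega)
      · apply div_nonneg
        · apply mul_nonneg
          · linarith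
          · exact (hpos (min k jstar) (by omega) (by omega)).le
        · exact mul_nonneg (hpos jstar hj1 hj2).le (hpos jstar hj1 hj2).le
    refine le_trans ?_ (Finset.sum_le_sum hterm)
    have hfactor : ∀ i : ℕ,
        c ^ (2*n-1) * ((m (a + i) - m (a + i + 1)) * m (min k jstar) / (m jstar * m jstar))
          = (c ^ (2*n-1) * m (min k jstar) / (m jstar * m jstar))
              * (m (a + i) - m (a + i + 1)) := by
      intro i; ring
    rw [Finset.sum_congr rfl (fun i _ => hfactor i), ← Finset.mul_sum]
    have hsum : ∑ i ∈ Finset.range (n + 1 - a), (m (a + i) - m (a + i + 1)) = m a := by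
      have h := Finset.sum_range_sub' (f := fun i => m (a + i)) (n := n + 1 - a)
      calc ∑ i ∈ Finset.range (n + 1 - a), (m (a + i) - m (a + i + 1))
          = ∑ i ∈ Finset.range (n + 1 - a),
              ((fun i => m (a + i)) i - (fun i => m (a + i)) (i + 1)) := by
            exact Finset.sum_congr rfl fun i _ => rfl
        _ = m (a + 0) - m (a + (n + 1 - a)) := h
        _ = m a := by rw [show a + (n + 1 - a) = n + 1 by omega, hmtop, Nat.add_zero, sub_zero]
    rw [hsum]
    have hmaxmin : m a * m (min k jstar) = m k * m jstar := by
      rcases le_total k jstar with h | h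
      · rw [hadef, max_eq_left h, min_eq_left h]; ring
      · rw [hadef, max_eq_right h, min_eq_right h]
    have hj0 : m jstar ≠ 0 := (hpos jstar hj1 hj2).ne'
    apply le_of_eq
    rw [div_mul_eq_mul_div, div_mul_eq_mul_div, div_eq_div_iff hj0 (mul_ne_zero hj0 hj0)]
    linear_combination (-(c ^ (2*n - 1) * m jstar)) * hmaxmin
  · -- target on the true side
    rcases lt_trichotomy k jstar with hklt | hkeq | hkgt
    · -- case C
      set τC : ℕ × ℕ → ℕ := fun x =>
        ((jstar + x.1) - jstar) + 1 + ((jstar + x.1) - (x.2 + 1)) + 1 + (k - (x.2 + 1)) with hτC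
      have hinjC : Set.InjOn
          (fun x : ℕ × ℕ => (⟨τC x, fun j : Fin (τC x + 1) =>
              DHNAux.pathC n hn0 jstar (jstar + x.1) (x.2 + 1) j.val⟩
            : Σ t : ℕ, Fin (t+1) → Bool × Fin n))
          ((Finset.range (n + 1 - jstar)) ×ˢ (Finset.range k) : Finset (ℕ × ℕ)) := by
        intro x hx y hy h
        simp only [Finset.coe_product, Set.mem_prod, Finset.coe_range, Set.mem_Iio] at hx hy
        have hfst : τC x = τC y := congrArg Sigma.fst h
        have hx1 : x.1 = y.1 := by
          by_contra hne'
          rcases Nat.lt_or_ge x.1 y.1 with hlt | hge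
          · have he := DHNAux.sigma_eval h (x.1 + 1)
            have he' : DHNAux.pathC n hn0 jstar (jstar + x.1) (x.2 + 1) (min (x.1+1) (τC x))
                = DHNAux.pathC n hn0 jstar (jstar + y.1) (y.2 + 1) (min (x.1+1) (τC y)) := he
            rw [show min (x.1+1) (τC x) = x.1 + 1 by simp only [hτC]; omega,
              show min (x.1+1) (τC y) = x.1 + 1 by simp only [hτC]; omega,
              DHNAux.pathC_eval₂ hn0 (by omega) (by omega),
              DHNAux.pathC_eval₁ hn0 (by omega)] at he'
            have hff := congrArg Prod.fst he'
            simp only [DHNAux.mkSt_fst] at hff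
            exact absurd hff (by decide)
          · have hlt' : y.1 < x.1 := by omega
            have he := DHNAux.sigma_eval h (y.1 + 1)
            have he' : DHNAux.pathC n hn0 jstar (jstar + x.1) (x.2 + 1) (min (y.1+1) (τC x))
                = DHNAux.pathC n hn0 jstar (jstar + y.1) (y.2 + 1) (min (y.1+1) (τC y)) := he
            rw [show min (y.1+1) (τC x) = y.1 + 1 by simp only [hτC]; omega,
              show min (y.1+1) (τC y) = y.1 + 1 by simp only [hτC]; omega,
              DHNAux.pathC_eval₁ hn0 (by omega),
              DHNAux.pathC_eval₂ hn0 (by omega) (by omega)] at he'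
            have hff := congrArg Prod.fst he'
            simp only [DHNAux.mkSt_fst] at hff
            exact absurd hff (by decide)
        have hx2 : x.2 = y.2 := by
          simp only [hτC] at hfst
          omega
        exact Prod.ext hx1 hx2
      have key := DHNAux.sum_paths_ge (α := Bool × Fin n) (2*n) F hFnn
        ((Finset.range (n + 1 - jstar)) ×ˢ (Finset.range k)) τC
        (fun x => fun j : Fin (τC x + 1) =>
          DHNAux.pathC n hn0 jstar (jstar + x.1) (x.2 + 1) j.val)
        (fun x hx => by
          rw [Finset.mem_product, Finset.mem_range, Finset.mem_range] at hx
          show ((jstar + x.1) - jstar) + 1 + ((jstar + x.1) - (x.2 + 1)) + 1 + (k - (x.2 + 1)) < 2*n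
          omega)
        hinjC
      refine le_trans ?_ key
      have hterm : ∀ x ∈ ((Finset.range (n + 1 - jstar)) ×ˢ (Finset.range k) : Finset (ℕ × ℕ)),
          c ^ (2*n - 1) * ((m (jstar + x.1) - m (jstar + x.1 + 1))
              * (m (x.2 + 1) - m ((x.2 + 1) - 1)) / (m jstar * m jstar))
            ≤ F (τC x) (fun j : Fin (τC x + 1) =>
                DHNAux.pathC n hn0 jstar (jstar + x.1) (x.2 + 1) j.val) := by
        intro x hx
        rw [Finset.mem_product, Finset.mem_range, Finset.mem_range] at hx
        have hq1 : jstar ≤ jstar + x.1 := by omega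
        have hq3 : jstar + x.1 ≤ n := by omega
        have hp1 : 1 ≤ x.2 + 1 := by omega
        have hp2 : x.2 + 1 ≤ k := by omega
        have hτx : τC x = ((jstar + x.1) - jstar) + 1 + ((jstar + x.1) - (x.2 + 1)) + 1
            + (k - (x.2 + 1)) := rfl
        have hmq : m (jstar + x.1 + 1) ≤ m (jstar + x.1) := by
          rcases Nat.lt_or_ge (jstar + x.1) n with h | h
          · exact hdown (jstar + x.1) hq1 h
          · rw [show jstar + x.1 + 1 = n + 1 by omega, hmtop]
            exact (hpos (jstar + x.1) (by omega) hq3).le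
        have hmp : m ((x.2 + 1) - 1) ≤ m (x.2 + 1) := by
          rw [show (x.2 + 1) - 1 = x.2 from rfl]
          rcases Nat.eq_zero_or_pos x.2 with h | h
          · rw [h, hm0]; exact (hpos 1 le_rfl (by omega)).le
          · exact hup x.2 h (by omega)
        have hcond : (fun j : Fin (τC x + 1) =>
              DHNAux.pathC n hn0 jstar (jstar + x.1) (x.2 + 1) j.val) 0 = jt ∧
            (fun j : Fin (τC x + 1) =>
              DHNAux.pathC n hn0 jstar (jstar + x.1) (x.2 + 1) j.val) (Fin.last _) = j' ∧
            (∀ l : Fin (τC x + 1), 0 < (l : ℕ) → (l : ℕ) < τC x →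
              ((fun j : Fin (τC x + 1) =>
                  DHNAux.pathC n hn0 jstar (jstar + x.1) (x.2 + 1) j.val) l ≠ j' ∧
               (fun j : Fin (τC x + 1) =>
                  DHNAux.pathC n hn0 jstar (jstar + x.1) (x.2 + 1) j.val) l ≠ jt)) := by
          refine ⟨?_, ?_, ?_⟩
          · show DHNAux.pathC n hn0 jstar (jstar + x.1) (x.2 + 1) ((0 : Fin _) : ℕ) = jt
            rw [Fin.val_zero, DHNAux.pathC_eval₁ hn0 (by omega), Nat.add_zero, hjtrep]
          · show DHNAux.pathC n hn0 jstar (jstar + x.1) (x.2 + 1) ((Fin.last _ : Fin _) : ℕ) = j'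
            rw [Fin.val_last, DHNAux.pathC_eval₃ hn0 (by rw [hτx]; omega),
              show (x.2 + 1) + (τC x - (((jstar + x.1) - jstar) + ((jstar + x.1) - (x.2 + 1)) + 2))
                = k by rw [hτx]; omega, hj'rep, hε]
          · intro l hl1 hl2
            simp only [hτC] at hl2
            rcases le_or_gt ((l : ℕ)) ((jstar + x.1) - jstar) with hcase | hcase
            · constructor
              · show DHNAux.pathC n hn0 jstar (jstar + x.1) (x.2 + 1) ((l : ℕ)) ≠ j'
                rw [DHNAux.pathC_eval₁ hn0 hcase, hj'rep, hε]
                intro h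
                have := (DHNAux.mkSt_inj hn0 (by omega) (by omega) hk1 hkn).1 h
                omega
              · show DHNAux.pathC n hn0 jstar (jstar + x.1) (x.2 + 1) ((l : ℕ)) ≠ jt
                rw [DHNAux.pathC_eval₁ hn0 hcase, hjtrep]
                intro h
                have := (DHNAux.mkSt_inj hn0 (by omega) (by omega) hj1 hj2).1 h
                omega
            · rcases le_or_gt ((l : ℕ))
                (((jstar + x.1) - jstar) + 1 + ((jstar + x.1) - (x.2 + 1))) with hcase2 | hcase2
              · have hlev1 : 1 ≤ (jstar + x.1) - ((l : ℕ) - ((jstar + x.1) - jstar) - 1) := by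
                  omega
                have hlev2 : (jstar + x.1) - ((l : ℕ) - ((jstar + x.1) - jstar) - 1) ≤ n := by
                  omega
                constructor
                · show DHNAux.pathC n hn0 jstar (jstar + x.1) (x.2 + 1) ((l : ℕ)) ≠ j'
                  rw [DHNAux.pathC_eval₂ hn0 hcase hcase2, hj'rep, hε]
                  intro h
                  have := (DHNAux.mkSt_inj hn0 hlev1 hlev2 hk1 hkn).1 h
                  exact absurd this.1 (by decide)
                · show DHNAux.pathC n hn0 jstar (jstar + x.1) (x.2 + 1) ((l : ℕ)) ≠ jt
                  rw [DHNAux.pathC_eval₂ hn0 hcase hcase2, hjtrep]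
                  intro h
                  have := (DHNAux.mkSt_inj hn0 hlev1 hlev2 hj1 hj2).1 h
                  exact absurd this.1 (by decide)
              · have hlev1 : 1 ≤ (x.2 + 1)
                    + ((l : ℕ) - (((jstar + x.1) - jstar) + ((jstar + x.1) - (x.2 + 1)) + 2)) := by
                  omega
                have hlev2 : (x.2 + 1)
                    + ((l : ℕ) - (((jstar + x.1) - jstar) + ((jstar + x.1) - (x.2 + 1)) + 2))
                      ≤ n := by
                  omega
                have hlev3 : (x.2 + 1)
                    + ((l : ℕ) - (((jstar + x.1) - jstar) + ((jstar + x.1) - (x.2 + 1)) + 2))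
                      < k := by
                  omega
                constructor
                · show DHNAux.pathC n hn0 jstar (jstar + x.1) (x.2 + 1) ((l : ℕ)) ≠ j'
                  rw [DHNAux.pathC_eval₃ hn0 hcase2, hj'rep, hε]
                  intro h
                  have := (DHNAux.mkSt_inj hn0 hlev1 hlev2 hk1 hkn).1 h
                  omega
                · show DHNAux.pathC n hn0 jstar (jstar + x.1) (x.2 + 1) ((l : ℕ)) ≠ jt
                  rw [DHNAux.pathC_eval₃ hn0 hcase2, hjtrep]
                  intro h
                  have := (DHNAux.mkSt_inj hn0 hlev1 hlev2 hj1 hj2).1 h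
                  omega
        rw [hFdef]
        dsimp only
        rw [if_pos hcond]
        try simp only [hτC]
        rw [hconv _ (DHNAux.pathC n hn0 jstar (jstar + x.1) (x.2 + 1)),
          DHNAux.caseC_prod hn0 hm0 hmtop hpos hup hdown hj1 hj2 k (jstar + x.1) (x.2 + 1)
            hklt hp1 hp2 hq1 hq3, hceq]
        apply mul_le_mul_of_nonneg_right
        · exact pow_le_pow_of_le_one hc0 hc1 (by omega)
        · apply div_nonneg
          · apply mul_nonneg <;> linarith
          · exact mul_nonneg (hpos jstar hj1 hj2).le (hpos jstar hj1 hj2).le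
      refine le_trans ?_ (Finset.sum_le_sum hterm)
      have hfactor : ∀ x : ℕ × ℕ,
          c ^ (2*n-1) * ((m (jstar + x.1) - m (jstar + x.1 + 1))
              * (m (x.2 + 1) - m ((x.2 + 1) - 1)) / (m jstar * m jstar))
            = (c ^ (2*n-1) / (m jstar * m jstar))
                * ((m (jstar + x.1) - m (jstar + x.1 + 1)) * (m (x.2 + 1) - m x.2)) := by
        intro x
        rw [show (x.2 + 1) - 1 = x.2 from rfl]
        ring
      rw [Finset.sum_congr rfl (fun x _ => hfactor x), ← Finset.mul_sum, Finset.sum_product]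
      dsimp only
      rw [← Finset.sum_mul_sum]
      have hsum1 : ∑ i ∈ Finset.range (n + 1 - jstar), (m (jstar + i) - m (jstar + i + 1))
          = m jstar := by
        have h := Finset.sum_range_sub' (f := fun i => m (jstar + i)) (n := n + 1 - jstar)
        calc ∑ i ∈ Finset.range (n + 1 - jstar), (m (jstar + i) - m (jstar + i + 1))
            = ∑ i ∈ Finset.range (n + 1 - jstar),
                ((fun i => m (jstar + i)) i - (fun i => m (jstar + i)) (i + 1)) :=
              Finset.sum_congr rfl fun i _ => rfl
          _ = m (jstar + 0) - m (jstar + (n + 1 - jstar)) := h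
          _ = m jstar := by
              rw [show jstar + (n + 1 - jstar) = n + 1 by omega, hmtop, Nat.add_zero, sub_zero]
      have hsum2 : ∑ i ∈ Finset.range k, (m (i + 1) - m i) = m k := by
        rw [Finset.sum_range_sub (f := m), hm0, sub_zero]
      rw [hsum1, hsum2]
      have hj0 : m jstar ≠ 0 := (hpos jstar hj1 hj2).ne'
      apply le_of_eq
      rw [div_mul_eq_mul_div, div_mul_eq_mul_div, div_eq_div_iff hj0 (mul_ne_zero hj0 hj0)]
      ring
    · -- j' = jt, contradiction
      exfalso
      apply hne
      rw [hj'rep, hε, hjtrep, hkeq]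
    · -- case A : straight shift path
      have key := DHNAux.sum_paths_ge (α := Bool × Fin n) (2*n) F hFnn
        ({0} : Finset ℕ) (fun _ => k - jstar)
        (fun _ => fun j : Fin (k - jstar + 1) => DHNAux.pathC n hn0 jstar k k j.val)
        (fun i _ => by show k - jstar < 2 * n; omega)
        (by intro x hx y hy _; simp only [Finset.coe_singleton, Set.mem_singleton_iff] at hx hy
            rw [hx, hy])
      rw [Finset.sum_singleton] at key
      refine le_trans ?_ key
      -- evaluate the single term
      have hcond : (fun j : Fin (k - jstar + 1) => DHNAux.pathC n hn0 jstar k k j.val) 0 = jt ∧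
          (fun j : Fin (k - jstar + 1) => DHNAux.pathC n hn0 jstar k k j.val) (Fin.last _) = j' ∧
          (∀ l : Fin (k - jstar + 1), 0 < (l : ℕ) → (l : ℕ) < k - jstar →
            ((fun j : Fin (k - jstar + 1) => DHNAux.pathC n hn0 jstar k k j.val) l ≠ j' ∧
             (fun j : Fin (k - jstar + 1) => DHNAux.pathC n hn0 jstar k k j.val) l ≠ jt)) := by
      -- three conditions
        refine ⟨?_, ?_, ?_⟩
        · show DHNAux.pathC n hn0 jstar k k ((0 : Fin (k - jstar + 1)) : ℕ) = jt
          rw [Fin.val_zero, DHNAux.pathC_eval₁ hn0 (by omega), Nat.add_zero, hjtrep]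
        · show DHNAux.pathC n hn0 jstar k k ((Fin.last (k - jstar) : Fin (k - jstar + 1)) : ℕ) = j'
          rw [Fin.val_last, DHNAux.pathC_eval₁ hn0 (le_refl _),
            show jstar + (k - jstar) = k by omega, hj'rep, hε]
        · intro l hl1 hl2
          constructor
          · show DHNAux.pathC n hn0 jstar k k (l : ℕ) ≠ j'
            rw [DHNAux.pathC_eval₁ hn0 (by omega), hj'rep, hε]
            intro h
            have := (DHNAux.mkSt_inj hn0 (by omega) (by omega) hk1 hkn).1 h
            omega
          · show DHNAux.pathC n hn0 jstar k k (l : ℕ) ≠ jt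
            rw [DHNAux.pathC_eval₁ hn0 (by omega), hjtrep]
            intro h
            have := (DHNAux.mkSt_inj hn0 (by omega) (by omega) hj1 hj2).1 h
            omega
      rw [hFdef]
      dsimp only
      rw [if_pos hcond, hconv (k - jstar) (DHNAux.pathC n hn0 jstar k k),
        DHNAux.caseA_prod hn0 hpos hdown hj1 k (by omega) hkn, hceq]
      rw [mul_comm (c ^ (k - jstar))]
      apply mul_le_mul_of_nonneg_left _ _
      · exact pow_le_pow_of_le_one hc0 hc1 (by omega)
      · apply div_nonneg (hpos k hk1 hkn).le (hpos jstar hj1 hj2).le
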